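/- Let 0 < μ < L and define φ(t) := (2/(Lt - 1))(Lt + (1/2)·μ/(L-μ)) and ψ(t) := 2Lt/(1 - (L-μ)t) for t ∈ (1/L, 1/(L-μ)). Then λ := 2 / ( sqrt( ((L-μ)²/μ²)(4L-μ)² + 8L(2L-μ)(L-μ)/μ ) - ((L-μ)/μ)(4L-μ) ) is the unique minimizer of max{φ(t), ψ(t)} over t ∈ (1/L, 1/(L-μ)), and λ lies in the open interval ( 1/(L - μ/2), 1/(L - (2L-μ)μ/(4L-3μ)) ). -/

import Mathlib

open Filter Finset
open scoped RealInnerProductSpace Topology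

noncomputable def lamConst (μ L : ℝ) : ℝ :=
  2 / (Real.sqrt ((L - μ) ^ 2 / μ ^ 2 * (4 * L - μ) ^ 2 +
        8 * L * (2 * L - μ) * (L - μ) / μ) - (L - μ) / μ * (4 * L - μ))

set_option maxHeartbeats 1000000 in
theorem lam_is_unique_minimizer (μ L : ℝ) (hμ : 0 < μ) (hμL : μ < L)
    (φ ψ : ℝ → ℝ)
    (hφ : ∀ r, φ r = 2 / (L * r - 1) * (L * r + 1 / 2 * (μ / (L - μ))))
    (hψ : ∀ r, ψ r = 2 * L * r / (1 - (L - μ) * r)) :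
    lamConst μ L ∈ Set.Ioo (1 / L) (1 / (L - μ)) ∧
    (∀ r ∈ Set.Ioo (1 / L) (1 / (L - μ)),
      max (φ (lamConst μ L)) (ψ (lamConst μ L)) ≤ max (φ r) (ψ r)) ∧
    (∀ r ∈ Set.Ioo (1 / L) (1 / (L - μ)),
      max (φ r) (ψ r) = max (φ (lamConst μ L)) (ψ (lamConst μ L)) → r = lamConst μ L) ∧
    lamConst μ L ∈ Set.Ioo (1 / (L - μ / 2)) (1 / (L - (2 * L - μ) * μ / (4 * L - 3 * μ))) := by
  have hL : 0 < L := hμ.trans hμL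
  have ha : 0 < L - μ := sub_pos.2 hμL
  have h2Lμ : 0 < 2 * L - μ := by linarith
  have h4Lμ : 0 < 4 * L - μ := by linarith
  have h43 : 0 < 4 * L - 3 * μ := by linarith
  set b : ℝ := (4 * L - μ) * (L - μ) with hbdef
  set D : ℝ := b ^ 2 + 8 * L * (2 * L - μ) * (L - μ) * μ with hDdef
  have hb : 0 < b := mul_pos h4Lμ ha
  have hD0 : 0 ≤ D := by positivity
  set s : ℝ := Real.sqrt D with hsdef
  have hs2 : s ^ 2 = D := Real.sq_sqrt hD0
  have hs0 : 0 ≤ s := Real.sqrt_nonneg D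
  -- rewrite lamConst
  have hlam : lamConst μ L = 2 * μ / (s - b) := by
    unfold lamConst
    have hE : (L - μ) ^ 2 / μ ^ 2 * (4 * L - μ) ^ 2 +
        8 * L * (2 * L - μ) * (L - μ) / μ = D / μ ^ 2 := by
      rw [hDdef, hbdef]; field_simp
    rw [hE, Real.sqrt_div hD0, Real.sqrt_sq hμ.le, ← hsdef]
    have h1 : s / μ - (L - μ) / μ * (4 * L - μ) = (s - b) / μ := by
      rw [hbdef]; field_simp
    rw [h1, div_div_eq_mul_div]
  -- key bounds on s
  have hs_gt1 : b + 2 * μ * (L - μ) < s := by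
    rw [hsdef]
    refine Real.lt_sqrt (by positivity) |>.2 ?_
    rw [hDdef, hbdef]
    nlinarith [mul_pos (mul_pos hμ hμ) (mul_pos hL ha)]
  have hs_lt1 : s < b + 2 * μ * L := by
    rw [hsdef]
    refine Real.sqrt_lt' (by positivity) |>.2 ?_
    rw [hDdef, hbdef]
    nlinarith [mul_pos (mul_pos hμ hμ) (mul_pos hL (add_pos ha hL))]
  have hs_lt2 : s < b + μ * (2 * L - μ) := by
    rw [hsdef]
    refine Real.sqrt_lt' (by positivity) |>.2 ?_
    rw [hDdef, hbdef]
    nlinarith [mul_pos (mul_pos hμ hμ) (mul_pos hμ h2Lμ)]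
  have hs_gt2 : b * (4 * L - μ) / (4 * L - 3 * μ) < s := by
    rw [hsdef]
    refine Real.lt_sqrt (by positivity) |>.2 ?_
    rw [div_pow, div_lt_iff₀ (by positivity)]
    rw [hDdef, hbdef]
    nlinarith [mul_pos (mul_pos (mul_pos hμ hμ) (mul_pos hμ hμ)) (mul_pos h2Lμ ha)]
  clear_value s b D
  have hsb : 0 < s - b := by nlinarith [mul_pos hμ ha]
  set t : ℝ := lamConst μ L with htdef
  clear_value t
  have ht : t = 2 * μ / (s - b) := hlam
  have ht_lo : 1 / L < t := by
    rw [ht, div_lt_div_iff₀ hL hsb]; nlinarith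
  have ht_hi : t < 1 / (L - μ) := by
    rw [ht, div_lt_div_iff₀ hsb ha]; nlinarith
  have htpos : 0 < t := lt_trans (by positivity) ht_lo
  have hden1 : ∀ r, 1 / L < r → 0 < L * r - 1 := by
    intro r hr
    have := (div_lt_iff₀ hL).1 hr
    linarith [mul_comm r L]
  have hden2 : ∀ r, r < 1 / (L - μ) → 0 < 1 - (L - μ) * r := by
    intro r hr
    have := (lt_div_iff₀ ha).1 hr
    linarith [mul_comm r (L - μ)]
  -- quadratic identity at t
  have hnum : 2*L*(2*L-μ)*(L-μ)*(2*μ)^2 - b*(2*μ)*(s-b) - μ*(s-b)^2 = 0 := by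
    linear_combination (-μ) * hs2 - μ * hDdef
  have hQ : 2 * L * (2 * L - μ) * (L - μ) * t ^ 2 - b * t - μ = 0 := by
    have hts : t * (s - b) = 2 * μ := by rw [ht]; exact div_mul_cancel₀ _ (ne_of_gt hsb)
    have h : (s - b) ^ 2 ≠ 0 := pow_ne_zero 2 (ne_of_gt hsb)
    have h2 : (s - b) ^ 2 * (2 * L * (2 * L - μ) * (L - μ) * t ^ 2 - b * t - μ) = 0 := by
      linear_combination hnum + (2 * L * (2 * L - μ) * (L - μ) * (t * (s - b) + 2 * μ) - b * (s - b)) * hts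
    rcases mul_eq_zero.1 h2 with h3 | h3
    · exact absurd h3 h
    · exact h3
  -- φ t = ψ t
  have hd1t : 0 < L * t - 1 := hden1 t ht_lo
  have hd2t : 0 < 1 - (L - μ) * t := hden2 t ht_hi
  have hEq : φ t = ψ t := by
    rw [hφ, hψ]
    rw [div_mul_eq_mul_div, div_eq_div_iff (ne_of_gt hd1t) (ne_of_gt hd2t)]
    have haa : (L - μ) ≠ 0 := ne_of_gt ha
    field_simp
    linear_combination (-1 : ℝ) * hQ - t * hbdef
  -- monotonicity of φ (decreasing)
  have hφ' : ∀ r, 1 / L < r → φ r = 2 + (2 + μ / (L - μ)) / (L * r - 1) := by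
    intro r hr
    have h1 := hden1 r hr
    rw [hφ]
    field_simp
    ring
  have hφmono : ∀ r r', 1 / L < r → r < r' → φ r' < φ r := by
    intro r r' hr hrr'
    have hr' : 1 / L < r' := hr.trans hrr'
    rw [hφ' r hr, hφ' r' hr']
    have hc : 0 < 2 + μ / (L - μ) := by positivity
    have := div_lt_div_of_pos_left hc (hden1 r hr) (by have := mul_lt_mul_of_pos_left hrr' hL; linarith : L * r - 1 < L * r' - 1)
    linarith
  -- monotonicity of ψ (increasing)
  have hψ' : ∀ r, r < 1 / (L - μ) → ψ r = (2 * L / (L - μ)) / (1 - (L - μ) * r) - 2 * L / (L - μ) := by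
    intro r hr
    have h2 := hden2 r hr
    rw [hψ, eq_sub_iff_add_eq, div_add_div _ _ h2.ne' ha.ne', div_div,
      div_eq_div_iff (mul_pos h2 ha).ne' (mul_pos ha h2).ne']
    ring
  have hψmono : ∀ r r', r < r' → r' < 1 / (L - μ) → ψ r < ψ r' := by
    intro r r' hrr' hr'
    have hr : r < 1 / (L - μ) := hrr'.trans hr'
    rw [hψ' r hr, hψ' r' hr']
    have hc : 0 < 2 * L / (L - μ) := by positivity
    have := div_lt_div_of_pos_left hc (hden2 r' hr') (by have := mul_lt_mul_of_pos_left hrr' ha; linarith : 1 - (L - μ) * r' < 1 - (L - μ) * r)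
    linarith
  have hmax : max (φ t) (ψ t) = φ t := by rw [hEq, max_self]
  have key : ∀ r ∈ Set.Ioo (1 / L) (1 / (L - μ)), r ≠ t →
      max (φ t) (ψ t) < max (φ r) (ψ r) := by
    intro r hr hne
    rcases lt_or_gt_of_ne hne with h | h
    · calc max (φ t) (ψ t) = φ t := hmax
        _ < φ r := hφmono r t hr.1 h
        _ ≤ max (φ r) (ψ r) := le_max_left _ _
    · calc max (φ t) (ψ t) = ψ t := by rw [hEq] at hmax ⊢; exact hmax
        _ < ψ r := hψmono t r h hr.2
        _ ≤ max (φ r) (ψ r) := le_max_right _ _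
  refine ⟨⟨ht_lo, ht_hi⟩, ?_, ?_, ?_, ?_⟩
  · intro r hr
    by_cases hne : r = t
    · subst hne; exact le_refl _
    · exact le_of_lt (key r hr hne)
  · intro r hr heq
    by_contra hne
    exact absurd heq (ne_of_gt (by simpa [heq] using key r hr hne))
  · -- 1 / (L - μ/2) < t
    have hpos : 0 < L - μ / 2 := by linarith
    rw [ht, div_lt_div_iff₀ hpos hsb]
    nlinarith
  · -- t < 1 / (L - (2L-μ)μ/(4L-3μ))
    have hd : L - (2 * L - μ) * μ / (4 * L - 3 * μ) = b / (4 * L - 3 * μ) := by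
      rw [hbdef, eq_div_iff h43.ne', sub_mul, div_mul_cancel₀ _ h43.ne']; ring
    rw [hd, ht, div_lt_div_iff₀ hsb (by positivity)]
    rw [div_lt_iff₀ h43] at hs_gt2
    have : 2 * μ * (b / (4 * L - 3 * μ)) * (4 * L - 3 * μ) = 2 * μ * b := by
      rw [mul_assoc, div_mul_cancel₀ _ h43.ne']
    nlinarith [this]
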